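/- Let g(y) := (−y³ + 2y² + y − 1)/(2y² + 4y − 3) and h(m₁,m₂) := (1 − m₁ − 2m₁² + m₁³ − m₂ + 4m₁²m₂ − 2m₁³m₂ − 2m₂² + 4m₁m₂² + m₂³ − 2m₁m₂³)/(3 − 4m₁ − 2m₁² − 4m₂ + 4m₁m₂ + 4m₁²m₂ − 2m₂² + 4m₁m₂²). For all reals m₁, m₂ with 0 ≤ m₂ ≤ m₁ < 1/2, if m₁ ≥ g(m₂) and m₂ ≥ g(m₁), then m₁ + m₂ + h(m₁,m₂) ≥ 1. -/

import Mathlib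

/-!
The inequality is one polynomial identity: with `P(x, y) = (x - g y)(3 - 4y - 2y²)` (this is
`gExcess x y`) and `D` the denominator of `h`,
`h(m₁,m₂) = 1 - m₁ - m₂ + ((1 - 2m₁) P(m₁,m₂) + (1 - 2m₂) P(m₂,m₁)) / D`,
and `D = (1 - m₁ - m₂) + (1 - 2m₁)(1 - 2m₂)(2 + m₁ + m₂)` is positive for `0 ≤ m₂ ≤ m₁ < 1/2`.
The two hypotheses on `g` say exactly that both values of `P` are nonnegative.
-/

/-- `g(y) := (−y³ + 2y² + y − 1)/(2y² + 4y − 3)`. -/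
noncomputable def g (y : ℝ) : ℝ := (-y^3 + 2*y^2 + y - 1) / (2*y^2 + 4*y - 3)

/-- `h(m₁,m₂)` from the proof of Claim 1. -/
noncomputable def h (m₁ m₂ : ℝ) : ℝ :=
  (1 - m₁ - 2*m₁^2 + m₁^3 - m₂ + 4*m₁^2*m₂ - 2*m₁^3*m₂ - 2*m₂^2 + 4*m₁*m₂^2
      + m₂^3 - 2*m₁*m₂^3) /
    (3 - 4*m₁ - 2*m₁^2 - 4*m₂ + 4*m₁*m₂ + 4*m₁^2*m₂ - 2*m₂^2 + 4*m₁*m₂^2)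

def gExcess (x y : ℝ) : ℝ := (-y^3 + 2*y^2 + y - 1) - x * (2*y^2 + 4*y - 3)

def hDenom (m₁ m₂ : ℝ) : ℝ :=
  3 - 4*m₁ - 2*m₁^2 - 4*m₂ + 4*m₁*m₂ + 4*m₁^2*m₂ - 2*m₂^2 + 4*m₁*m₂^2

lemma g_denom_neg {y : ℝ} (hy₀ : -2 ≤ y) (hy : y ≤ 1/2) : 2*y^2 + 4*y - 3 < 0 := by
  nlinarith [mul_nonneg (by linarith : 0 ≤ y + 2) (by linarith : 0 ≤ 1/2 - y)]

lemma gExcess_nonneg_of_g_le {x y : ℝ} (hy : 2*y^2 + 4*y - 3 < 0) (hxy : g y ≤ x) :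
    0 ≤ gExcess x y := by
  rw [g, div_le_iff_of_neg hy] at hxy
  rw [gExcess]
  linarith

lemma hDenom_eq (m₁ m₂ : ℝ) :
    hDenom m₁ m₂ = (1 - m₁ - m₂) + (1 - 2*m₁) * (1 - 2*m₂) * (2 + m₁ + m₂) := by
  rw [hDenom]
  ring

lemma hDenom_pos {m₁ m₂ : ℝ} (h₁ : m₁ < 1/2) (h₂ : m₂ < 1/2) (hsum : -2 ≤ m₁ + m₂) :
    0 < hDenom m₁ m₂ := by
  rw [hDenom_eq]
  have : 0 ≤ (1 - 2*m₁) * (1 - 2*m₂) * (2 + m₁ + m₂) := by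
    have := mul_pos (by linarith : 0 < 1 - 2*m₁) (by linarith : 0 < 1 - 2*m₂)
    exact mul_nonneg this.le (by linarith)
  linarith

lemma h_eq {m₁ m₂ : ℝ} (hD : hDenom m₁ m₂ ≠ 0) :
    h m₁ m₂ = 1 - m₁ - m₂
      + ((1 - 2*m₁) * gExcess m₁ m₂ + (1 - 2*m₂) * gExcess m₂ m₁) / hDenom m₁ m₂ := by
  rw [h, ← hDenom, add_div' _ _ _ hD, div_left_inj' hD, gExcess, gExcess, hDenom]
  ring

/-- If `0 ≤ m₂ ≤ m₁ < 1/2`, `m₁ ≥ g(m₂)` and `m₂ ≥ g(m₁)`, then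
`m₁ + m₂ + h(m₁,m₂) ≥ 1`. -/
theorem sum_with_h_ge_one (m₁ m₂ : ℝ) (h0 : 0 ≤ m₂) (h1 : m₂ ≤ m₁) (h2 : m₁ < 1/2)
    (hg1 : g m₂ ≤ m₁) (hg2 : g m₁ ≤ m₂) :
    1 ≤ m₁ + m₂ + h m₁ m₂ := by
  have hD : 0 < hDenom m₁ m₂ := hDenom_pos h2 (by linarith) (by linarith)
  have hP : 0 ≤ gExcess m₁ m₂ :=
    gExcess_nonneg_of_g_le (g_denom_neg (by linarith) (by linarith)) hg1
  have hQ : 0 ≤ gExcess m₂ m₁ :=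
    gExcess_nonneg_of_g_le (g_denom_neg (by linarith) (by linarith)) hg2
  have hexcess : 0 ≤ ((1 - 2*m₁) * gExcess m₁ m₂ + (1 - 2*m₂) * gExcess m₂ m₁) / hDenom m₁ m₂ :=
    div_nonneg (add_nonneg (mul_nonneg (by linarith) hP) (mul_nonneg (by linarith) hQ)) hD.le
  rw [h_eq hD.ne']
  linarith
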